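/- For a set of atoms A with |A| > 1, two closed conditional expressions are provably equal in CP_rp if and only if they have the same reply and the same state transformation on every state in RP = {f : A⁺ → {T,F} | f(σaa) = f(σa) for all a ∈ A, σ ∈ A*}. -/

import Mathlib

inductive CE (A : Type) : Type
  | tt : CE A
  | ff : CE A
  | atom : A → CE A
  | cond : CE A → CE A → CE A → CE A

inductive Deriv {A : Type} (Ax : CE A → CE A → Prop) : CE A → CE A → Prop
  | ax {t t'} : Ax t t' → Deriv Ax t t'
  | refl (t) : Deriv Ax t t
  | symm {t t'} : Deriv Ax t t' → Deriv Ax t' t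
  | trans {t t' t''} : Deriv Ax t t' → Deriv Ax t' t'' → Deriv Ax t t''
  | congr {x x' y y' z z'} : Deriv Ax x x' → Deriv Ax y y' → Deriv Ax z z' →
      Deriv Ax (.cond x y z) (.cond x' y' z')
  | cp1 (x y) : Deriv Ax (.cond x .tt y) x
  | cp2 (x y) : Deriv Ax (.cond x .ff y) y
  | cp3 (x) : Deriv Ax (.cond .tt x .ff) x
  | cp4 (x y z u v) : Deriv Ax (.cond x (.cond y z u) v) (.cond (.cond x y v) z (.cond x u v))

/-- Derivability from the CP axioms alone (no extra axioms). -/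
def CP {A : Type} : CE A → CE A → Prop := Deriv (fun _ _ => False)

/-- The axiom schemes (CPrp1) and (CPrp2), for each atom a. -/
def AxRp {A : Type} : CE A → CE A → Prop := fun s t =>
  (∃ (a : A) (x y z : CE A),
      s = .cond (.cond x (.atom a) y) (.atom a) z ∧
      t = .cond (.cond x (.atom a) x) (.atom a) z) ∨
  (∃ (a : A) (x y z : CE A),
      s = .cond x (.atom a) (.cond y (.atom a) z) ∧
      t = .cond x (.atom a) (.cond z (.atom a) z))

/-- Nonempty strings of atoms (A⁺). -/
def NEStr (A : Type) := {l : List A // l ≠ []}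

/-- States: valuation functions f : A⁺ → {T,F}. -/
def StateF (A : Type) := NEStr A → Bool

mutual
/-- The reply `t ! f` of a conditional expression in state `f`. -/
def reply {A : Type} : CE A → StateF A → Bool
  | .tt, _ => true
  | .ff, _ => false
  | .atom a, f => f ⟨[a], by simp⟩
  | .cond x y z, f => if reply y f then reply x (applyCE y f) else reply z (applyCE y f)

/-- The state transformation `t • f` of a conditional expression. -/
def applyCE {A : Type} : CE A → StateF A → StateF A
  | .tt, f => f
  | .ff, f => f
  | .atom a, f => fun σ => f ⟨a :: σ.1, by simp⟩
  | .cond x y z, f => if reply y f then applyCE x (applyCE y f) else applyCE z (applyCE y f)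
end

/-- Repetition-proof states: f(σaa) = f(σa) for all atoms a and strings σ. -/
def RPset (A : Type) : Set (StateF A) :=
  {f | ∀ (σ : List A) (a : A), f ⟨σ ++ [a, a], by simp⟩ = f ⟨σ ++ [a], by simp⟩}

/-!
Soundness: evaluating `t` in `f` queries `f` along the string `trace t f` of tested atoms, and
`t • f` is `f` shifted by that string. Hence repetition-proof states are closed under `•`, and the
two rp-axioms hold because a test of `a` right after a test of `a` gets the same reply.

Completeness: every expression is derivably equal to an rp-basic form, so it suffices that two
rp-basic forms agreeing on all repetition-proof states are equal. Their first tested atoms agree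
(the state replying "is the first letter `a`?" tells them apart, and, using a second atom, tells a
test from a constant). Below a common test of `a`, the left branches agree on every state `g` with
`g(a) = T`, since any such `g` is `a • f` for a repetition-proof `f` with `f(a) = T`. Such a branch
does not branch on `a` before testing another atom, so its behaviour ignores the values of the
state on the strings `aⁿ` except where repetition-proofness forces them to be `g(a)`; hence the
branches agree on all repetition-proof states, and induction applies.
-/

variable {A : Type}

theorem state_congr (f : StateF A) {l l' : List A} (h : l ≠ []) (h' : l' ≠ []) (e : l = l') :
    f ⟨l, h⟩ = f ⟨l', h'⟩ := by
  subst e; rfl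

def trace : CE A → StateF A → List A
  | .tt, _ => []
  | .ff, _ => []
  | .atom a, _ => [a]
  | .cond x y z, f =>
      trace y f ++ (if reply y f then trace x (applyCE y f) else trace z (applyCE y f))

theorem reply_cond (x y z : CE A) (f : StateF A) :
    reply (.cond x y z) f = if reply y f then reply x (applyCE y f) else reply z (applyCE y f) :=
  rfl

theorem applyCE_cond (x y z : CE A) (f : StateF A) :
    applyCE (.cond x y z) f =
      if reply y f then applyCE x (applyCE y f) else applyCE z (applyCE y f) :=
  rfl

theorem applyCE_eq_trace_append (t : CE A) (f : StateF A) (σ : List A) (h : σ ≠ []) :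
    applyCE t f ⟨σ, h⟩ = f ⟨trace t f ++ σ, by simp [h]⟩ := by
  induction t generalizing f σ with
  | tt | ff | atom => rfl
  | cond x y z ihx ihy ihz =>
    cases hr : reply y f
    · simp only [applyCE_cond, hr, Bool.false_eq_true, ↓reduceIte]
      rw [ihz, ihy]
      exact state_congr _ _ _ (by simp [trace, hr])
    · simp only [applyCE_cond, hr, ↓reduceIte]
      rw [ihx, ihy]
      exact state_congr _ _ _ (by simp [trace, hr])

theorem trace_cond_atom (u v : CE A) (a : A) (f : StateF A) :
    trace (.cond u (.atom a) v) f =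
      a :: trace (if f ⟨[a], by simp⟩ then u else v) (applyCE (.atom a) f) := by
  cases h : f ⟨[a], by simp⟩ <;> simp [trace, reply, h]

theorem applyCE_mem_RPset {f : StateF A} (hf : f ∈ RPset A) (t : CE A) :
    applyCE t f ∈ RPset A := by
  intro σ a
  rw [applyCE_eq_trace_append, applyCE_eq_trace_append]
  calc f ⟨trace t f ++ (σ ++ [a, a]), _⟩
      = f ⟨(trace t f ++ σ) ++ [a, a], by simp⟩ := state_congr _ _ _ (by simp)
    _ = f ⟨(trace t f ++ σ) ++ [a], by simp⟩ := hf _ a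
    _ = f ⟨trace t f ++ (σ ++ [a]), _⟩ := state_congr _ _ _ (by simp)

theorem RPset.apply_of_forall_eq {f : StateF A} (hf : f ∈ RPset A) {a : A} {l : List A}
    (hl : l ≠ []) (hpure : ∀ c ∈ l, c = a) : f ⟨l, hl⟩ = f ⟨[a], by simp⟩ := by
  have hrep (n : ℕ) : f ⟨List.replicate (n + 1) a, by simp⟩ = f ⟨[a], by simp⟩ := by
    induction n with
    | zero => rfl
    | succ n ih =>
      calc f ⟨List.replicate (n + 2) a, _⟩
          = f ⟨List.replicate n a ++ [a, a], by simp⟩ :=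
            state_congr _ _ _ (by simp [List.replicate_add])
        _ = f ⟨List.replicate n a ++ [a], by simp⟩ := hf _ a
        _ = f ⟨List.replicate (n + 1) a, by simp⟩ := state_congr _ _ _ List.replicate_succ'.symm
        _ = f ⟨[a], by simp⟩ := ih
  obtain ⟨n, hn⟩ := Nat.exists_eq_add_one_of_ne_zero (List.length_pos_iff.2 hl).ne'
  rw [← hrep n]
  exact state_congr _ _ _ (List.eq_replicate_iff.2 ⟨hn, hpure⟩)

def AgreeAt (t t' : CE A) (f : StateF A) : Prop :=
  reply t f = reply t' f ∧ applyCE t f = applyCE t' f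

def SemEq (t t' : CE A) : Prop :=
  ∀ f ∈ RPset A, AgreeAt t t' f

theorem SemEq.refl (t : CE A) : SemEq t t := fun _ _ => ⟨rfl, rfl⟩

theorem SemEq.symm {t t' : CE A} (h : SemEq t t') : SemEq t' t :=
  fun f hf => ⟨(h f hf).1.symm, (h f hf).2.symm⟩

theorem SemEq.trans {t t' t'' : CE A} (h : SemEq t t') (h' : SemEq t' t'') : SemEq t t'' :=
  fun f hf => ⟨(h f hf).1.trans (h' f hf).1, (h f hf).2.trans (h' f hf).2⟩

theorem SemEq.cond {x x' y y' z z' : CE A} (hx : SemEq x x') (hy : SemEq y y')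
    (hz : SemEq z z') : SemEq (.cond x y z) (.cond x' y' z') := by
  intro f hf
  obtain ⟨hry, hay⟩ := hy f hf
  have hf' := applyCE_mem_RPset hf y
  rw [AgreeAt, reply_cond, reply_cond, applyCE_cond, applyCE_cond, ← hry, ← hay]
  cases reply y f
  · exact hz _ hf'
  · exact hx _ hf'

theorem semEq_of_deriv {t t' : CE A} (h : Deriv AxRp t t') : SemEq t t' := by
  induction h with
  | ax h =>
    rcases h with ⟨a, x, y, z, rfl, rfl⟩ | ⟨a, x, y, z, rfl, rfl⟩ <;>
    · intro f hf
      have haa : f ⟨[a, a], by simp⟩ = f ⟨[a], by simp⟩ := hf [] a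
      cases ha : f ⟨[a], by simp⟩ <;> simp [AgreeAt, reply, applyCE, ha, haa]
  | refl t => exact .refl t
  | symm _ ih => exact ih.symm
  | trans _ _ ih ih' => exact ih.trans ih'
  | congr _ _ _ ihx ihy ihz => exact ihx.cond ihy ihz
  | cp1 | cp2 => exact fun _ _ => ⟨rfl, rfl⟩
  | cp3 x =>
    intro f _
    cases h : reply x f <;> simp [AgreeAt, reply, applyCE, h]
  | cp4 x y z u v =>
    intro f _
    cases h : reply z f
    · cases h' : reply u (applyCE z f) <;> simp [AgreeAt, reply, applyCE, h, h']
    · cases h' : reply y (applyCE z f) <;> simp [AgreeAt, reply, applyCE, h, h']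

inductive NoBranchOn (a : A) : CE A → Prop
  | tt : NoBranchOn a .tt
  | ff : NoBranchOn a .ff
  | cond_ne {b : A} {u v : CE A} : b ≠ a → NoBranchOn a (.cond u (.atom b) v)
  | cond_self {u : CE A} : NoBranchOn a u → NoBranchOn a (.cond u (.atom a) u)

-- The rp-basic forms of the paper, characterised inductively.
inductive RpNormal : CE A → Prop
  | tt : RpNormal .tt
  | ff : RpNormal .ff
  | cond {a : A} {x y : CE A} : RpNormal x → RpNormal y → NoBranchOn a x → NoBranchOn a y →
      RpNormal (.cond x (.atom a) y)

theorem RpNormal.exists_left (a : A) {x : CE A} (hx : RpNormal x) (z : CE A) :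
    ∃ x', RpNormal x' ∧ NoBranchOn a x' ∧
      Deriv AxRp (.cond x (.atom a) z) (.cond x' (.atom a) z) := by
  cases hx with
  | tt => exact ⟨_, .tt, .tt, .refl _⟩
  | ff => exact ⟨_, .ff, .ff, .refl _⟩
  | @cond b u v hu hv hbu hbv =>
    by_cases hb : b = a
    · subst hb
      exact ⟨_, .cond hu hu hbu hbu, .cond_self hbu, .ax (.inl ⟨b, u, v, z, rfl, rfl⟩)⟩
    · exact ⟨_, .cond hu hv hbu hbv, .cond_ne hb, .refl _⟩

theorem RpNormal.exists_right (a : A) (x : CE A) {z : CE A} (hz : RpNormal z) :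
    ∃ z', RpNormal z' ∧ NoBranchOn a z' ∧
      Deriv AxRp (.cond x (.atom a) z) (.cond x (.atom a) z') := by
  cases hz with
  | tt => exact ⟨_, .tt, .tt, .refl _⟩
  | ff => exact ⟨_, .ff, .ff, .refl _⟩
  | @cond b u v hu hv hbu hbv =>
    by_cases hb : b = a
    · subst hb
      exact ⟨_, .cond hv hv hbv hbv, .cond_self hbv, .ax (.inr ⟨b, x, u, v, rfl, rfl⟩)⟩
    · exact ⟨_, .cond hu hv hbu hbv, .cond_ne hb, .refl _⟩

theorem exists_rpNormal_cond_atom (a : A) {x z : CE A} (hx : RpNormal x) (hz : RpNormal z) :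
    ∃ n, RpNormal n ∧ Deriv AxRp (.cond x (.atom a) z) n := by
  obtain ⟨x', hx', hax', hdx⟩ := hx.exists_left a z
  obtain ⟨z', hz', haz', hdz⟩ := hz.exists_right a x'
  exact ⟨_, .cond hx' hz' hax' haz', hdx.trans hdz⟩

theorem exists_rpNormal_cond {x y z : CE A} (hx : RpNormal x) (hy : RpNormal y)
    (hz : RpNormal z) : ∃ n, RpNormal n ∧ Deriv AxRp (.cond x y z) n := by
  induction hy with
  | tt => exact ⟨x, hx, .cp1 x z⟩
  | ff => exact ⟨z, hz, .cp2 x z⟩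
  | @cond a p q _ _ _ _ ihp ihq =>
    obtain ⟨np, hnp, hdp⟩ := ihp
    obtain ⟨nq, hnq, hdq⟩ := ihq
    obtain ⟨n, hn, hd⟩ := exists_rpNormal_cond_atom a hnp hnq
    exact ⟨n, hn, (Deriv.cp4 x p (.atom a) q z).trans ((hdp.congr (.refl _) hdq).trans hd)⟩

theorem exists_rpNormal_deriv (t : CE A) : ∃ n, RpNormal n ∧ Deriv AxRp t n := by
  induction t with
  | tt => exact ⟨_, .tt, .refl _⟩
  | ff => exact ⟨_, .ff, .refl _⟩
  | atom a => exact ⟨_, .cond .tt .ff .tt .ff, (Deriv.cp3 _).symm⟩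
  | cond x y z ihx ihy ihz =>
    obtain ⟨nx, hnx, hdx⟩ := ihx
    obtain ⟨ny, hny, hdy⟩ := ihy
    obtain ⟨nz, hnz, hdz⟩ := ihz
    obtain ⟨n, hn, hd⟩ := exists_rpNormal_cond hnx hny hnz
    exact ⟨n, hn, (hdx.congr hdy hdz).trans hd⟩

open Classical in
noncomputable def setPure (a : A) (b : Bool) (g : StateF A) : StateF A :=
  fun τ => if ∀ c ∈ τ.1, c = a then b else g τ

theorem setPure_of_not_forall {a : A} (b : Bool) (g : StateF A) {l : List A} (hl : l ≠ [])
    (h : ¬ ∀ c ∈ l, c = a) : setPure a b g ⟨l, hl⟩ = g ⟨l, hl⟩ :=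
  if_neg h

theorem setPure_mem_RPset (a : A) (b : Bool) {g : StateF A} (hg : g ∈ RPset A) :
    setPure a b g ∈ RPset A := by
  intro σ e
  have hpure : (∀ c ∈ σ ++ [e, e], c = a) ↔ (∀ c ∈ σ ++ [e], c = a) := by simp
  by_cases h : ∀ c ∈ σ ++ [e], c = a
  · simp only [setPure, if_pos h, if_pos (hpure.2 h)]
  · rw [setPure_of_not_forall _ _ _ h, setPure_of_not_forall _ _ _ (mt hpure.1 h)]
    exact hg σ e

theorem applyCE_atom_setPure_self (a : A) (b : Bool) (g : StateF A) :
    applyCE (.atom a) (setPure a b g) = setPure a b (applyCE (.atom a) g) := by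
  funext ⟨l, hl⟩
  have hpure : (∀ c ∈ a :: l, c = a) ↔ (∀ c ∈ l, c = a) := by simp
  by_cases h : ∀ c ∈ l, c = a
  · simp only [applyCE, setPure, if_pos h, if_pos (hpure.2 h)]
  · exact (setPure_of_not_forall _ _ _ (mt hpure.1 h)).trans
      (setPure_of_not_forall b (applyCE (.atom a) g) hl h).symm

theorem reply_atom_setPure_of_ne {a c : A} (hc : c ≠ a) (b : Bool) (g : StateF A) :
    reply (.atom c) (setPure a b g) = reply (.atom c) g :=
  setPure_of_not_forall _ _ _ (by simpa using hc)

theorem applyCE_atom_setPure_of_ne {a c : A} (hc : c ≠ a) (b : Bool) (g : StateF A) :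
    applyCE (.atom c) (setPure a b g) = applyCE (.atom c) g :=
  funext fun _ => setPure_of_not_forall _ _ _ fun h => hc (h c (by simp))

theorem NoBranchOn.reply_trace_setPure {a : A} {x : CE A} (hx : NoBranchOn a x) (b : Bool)
    (g : StateF A) :
    reply x (setPure a b g) = reply x g ∧ trace x (setPure a b g) = trace x g := by
  induction hx generalizing g with
  | tt | ff => exact ⟨rfl, rfl⟩
  | cond_ne hc =>
    simp [reply_cond, trace, reply_atom_setPure_of_ne hc, applyCE_atom_setPure_of_ne hc]
  | @cond_self u _ ih =>
    simp only [reply_cond, trace_cond_atom, ite_self, applyCE_atom_setPure_self]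
    exact ⟨(ih _).1, by rw [(ih _).2]⟩

theorem NoBranchOn.forall_mem_trace_eq_iff {a : A} {x : CE A} (hx : NoBranchOn a x)
    (g k : StateF A) : (∀ c ∈ trace x g, c = a) ↔ (∀ c ∈ trace x k, c = a) := by
  induction hx generalizing g k with
  | tt | ff => simp [trace]
  | cond_ne hc => simp [trace_cond_atom, hc]
  | cond_self _ ih => simpa [trace_cond_atom] using ih _ _

open Classical in
theorem NoBranchOn.applyCE_eq_ite {a : A} {x : CE A} (hx : NoBranchOn a x) {g : StateF A}
    (hg : g ∈ RPset A) (b : Bool) (σ : List A) (hσ : σ ≠ []) :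
    applyCE x g ⟨σ, hσ⟩ =
      if ∀ c ∈ trace x g ++ σ, c = a then g ⟨[a], by simp⟩
      else applyCE x (setPure a b g) ⟨σ, hσ⟩ := by
  rw [applyCE_eq_trace_append, applyCE_eq_trace_append]
  split_ifs with h
  · exact RPset.apply_of_forall_eq hg _ h
  · rw [setPure_of_not_forall _ _ _ (by rwa [(hx.reply_trace_setPure b g).2])]
    exact state_congr _ _ _ (by rw [(hx.reply_trace_setPure b g).2])

theorem NoBranchOn.semEq_of_agreeAt {a : A} {x x' : CE A} (hx : NoBranchOn a x)
    (hx' : NoBranchOn a x') (b : Bool)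
    (H : ∀ g ∈ RPset A, g ⟨[a], by simp⟩ = b → AgreeAt x x' g) : SemEq x x' := by
  classical
  have hval (g : StateF A) : setPure a b g ⟨[a], by simp⟩ = b := if_pos (by simp)
  -- Purity of the trace does not depend on the state, and `setPure a b (fun _ => !b)` detects it.
  have hpure (g : StateF A) : (∀ c ∈ trace x g, c = a) ↔ (∀ c ∈ trace x' g, c = a) := by
    let k := setPure a b fun _ => !b
    have hk := congrFun (H k (setPure_mem_RPset a b fun _ _ => rfl) (hval _)).2 ⟨[a], by simp⟩
    rw [applyCE_eq_trace_append, applyCE_eq_trace_append] at hk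
    rw [hx.forall_mem_trace_eq_iff g k, hx'.forall_mem_trace_eq_iff g k]
    cases b <;> simpa [k, setPure, or_imp, forall_and] using hk
  intro g hg
  obtain ⟨hr, ha⟩ := H _ (setPure_mem_RPset a b hg) (hval g)
  refine ⟨?_, funext fun ⟨σ, hσ⟩ => ?_⟩
  · rwa [(hx.reply_trace_setPure b g).1, (hx'.reply_trace_setPure b g).1] at hr
  · rw [hx.applyCE_eq_ite hg b, hx'.applyCE_eq_ite hg b, ha]
    exact if_congr (by simp only [List.forall_mem_append, hpure g]) rfl rfl

def liftState (g : StateF A) : StateF A := fun τ =>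
  match τ with
  | ⟨[], h⟩ => absurd rfl h
  | ⟨[c], _⟩ => g ⟨[c], by simp⟩
  | ⟨_ :: c :: ρ, _⟩ => g ⟨c :: ρ, by simp⟩

theorem liftState_mem_RPset {g : StateF A} (hg : g ∈ RPset A) : liftState g ∈ RPset A := by
  rintro (_ | ⟨c, _ | ⟨d, σ⟩⟩) e
  · rfl
  · exact hg [] e
  · exact hg (d :: σ) e

theorem applyCE_atom_liftState (a : A) (g : StateF A) : applyCE (.atom a) (liftState g) = g := by
  funext ⟨l, hl⟩
  cases l with
  | nil => exact absurd rfl hl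
  | cons => rfl

theorem SemEq.agreeAt_of_cond_atom {a : A} {x y x' y' : CE A}
    (h : SemEq (.cond x (.atom a) y) (.cond x' (.atom a) y')) {g : StateF A}
    (hg : g ∈ RPset A) : if g ⟨[a], by simp⟩ then AgreeAt x x' g else AgreeAt y y' g := by
  obtain ⟨hr, ha⟩ := h _ (liftState_mem_RPset hg)
  have hval : reply (.atom a) (liftState g) = g ⟨[a], by simp⟩ := rfl
  rw [reply_cond, reply_cond, hval, applyCE_atom_liftState] at hr
  rw [applyCE_cond, applyCE_cond, hval, applyCE_atom_liftState] at ha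
  split_ifs with hga <;> exact ⟨by simpa [hga] using hr, by simpa [hga] using ha⟩

def headState (p : A → Bool) : StateF A := fun τ => p (τ.1.head τ.2)

theorem headState_mem_RPset (p : A → Bool) : headState p ∈ RPset A := by
  rintro (_ | _) _ <;> rfl

theorem applyCE_cond_atom_headState (u v : CE A) (a : A) (p : A → Bool) (σ : List A)
    (hσ : σ ≠ []) : applyCE (.cond u (.atom a) v) (headState p) ⟨σ, hσ⟩ = p a := by
  rw [applyCE_eq_trace_append]
  simp only [trace_cond_atom]
  rfl

theorem not_semEq_tt_ff : ¬ SemEq (.tt : CE A) .ff := fun h => by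
  simpa [AgreeAt, reply] using h (fun _ => true) fun _ _ => rfl

theorem not_semEq_cond_atom_of_ne {a b : A} (hab : a ≠ b) (u v u' v' : CE A) :
    ¬ SemEq (.cond u (.atom a) v) (.cond u' (.atom b) v') := by
  classical
  intro h
  have := congrFun (h _ (headState_mem_RPset fun c => decide (c = a))).2 ⟨[a], by simp⟩
  rw [applyCE_cond_atom_headState, applyCE_cond_atom_headState] at this
  simp [hab.symm] at this

theorem not_semEq_cond_atom_of_applyCE_eq_self [Nontrivial A] {x : CE A}
    (hx : ∀ f, applyCE x f = f) (u v : CE A) (a : A) : ¬ SemEq x (.cond u (.atom a) v) := by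
  classical
  intro h
  obtain ⟨b, hb⟩ := exists_ne a
  have := congrFun (h _ (headState_mem_RPset fun c => decide (c = a))).2 ⟨[b], by simp⟩
  rw [hx, applyCE_cond_atom_headState] at this
  simp [headState, hb] at this

theorem RpNormal.eq_of_semEq [Nontrivial A] {x y : CE A} (hx : RpNormal x) (hy : RpNormal y)
    (h : SemEq x y) : x = y := by
  induction hx generalizing y with
  | tt =>
    cases hy with
    | tt => rfl
    | ff => exact absurd h not_semEq_tt_ff
    | cond => exact absurd h (not_semEq_cond_atom_of_applyCE_eq_self (fun _ => rfl) _ _ _)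
  | ff =>
    cases hy with
    | tt => exact absurd h.symm not_semEq_tt_ff
    | ff => rfl
    | cond => exact absurd h (not_semEq_cond_atom_of_applyCE_eq_self (fun _ => rfl) _ _ _)
  | @cond a x₁ y₁ _ _ hax₁ hay₁ ihx ihy =>
    cases hy with
    | tt | ff =>
      exact absurd h.symm (not_semEq_cond_atom_of_applyCE_eq_self (fun _ => rfl) _ _ _)
    | @cond b x₂ y₂ hx₂ hy₂ hbx₂ hby₂ =>
      obtain rfl : a = b := by_contra fun hab => not_semEq_cond_atom_of_ne hab _ _ _ _ h
      have hx : SemEq x₁ x₂ := hax₁.semEq_of_agreeAt hbx₂ true fun g hg hga => by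
        simpa [hga] using h.agreeAt_of_cond_atom hg
      have hy : SemEq y₁ y₂ := hay₁.semEq_of_agreeAt hby₂ false fun g hg hga => by
        simpa [hga] using h.agreeAt_of_cond_atom hg
      rw [ihx hx₂ hx, ihy hy₂ hy]

/-- Soundness and completeness of CP_rp with respect to repetition-proof states. -/
theorem cprp_sound_complete (A : Type) (hA : ∃ a b : A, a ≠ b) (t t' : CE A) :
    Deriv AxRp t t' ↔
      ∀ f ∈ RPset A, reply t f = reply t' f ∧ applyCE t f = applyCE t' f := by
  have : Nontrivial A := ⟨hA⟩
  refine ⟨semEq_of_deriv, fun h => ?_⟩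
  obtain ⟨n, hn, htn⟩ := exists_rpNormal_deriv t
  obtain ⟨n', hn', htn'⟩ := exists_rpNormal_deriv t'
  have hnn' : n = n' :=
    hn.eq_of_semEq hn' ((semEq_of_deriv htn).symm.trans (SemEq.trans h (semEq_of_deriv htn')))
  exact htn.trans (hnn' ▸ htn'.symm)
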